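/- arXiv:2008.05932 — 4 statements merged into one kernel-verified Lean document; each statement's English description precedes it below -/
import Mathlib

section
/- Let n ≥ 1 and M ≥ n be integers. Let P : Fin n → ℝ be an antitone quantum distribution, i.e. P(i) = p(i)/M with positive integers p(i) summing to M and P(i) ≥ P(j) whenever i ≤ j. Let U : Fin n → ℝ assign U(i) = 1/M for i < n−1 and U(n−1) = (M−n+1)/M. Then for every quantum distribution Q : Fin n → ℝ with the same quantum, i.e. Q(i) = q(i)/M with positive integers q(i) summing to M, it holds that KL(P‖Q) ≤ KL(P‖U). -/
/-- Kullback–Leibler divergence (base-2 logarithm) between two finite distributions. -/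
noncomputable def KL {n : ℕ} (P Q : Fin n → ℝ) : ℝ :=
  ∑ i, P i * Real.logb 2 (P i / Q i)

lemma aux_sum_le_prod {ι : Type*} (s : Finset ι) (f : ι → ℕ) (h : ∀ i ∈ s, 1 ≤ f i) :
    ∑ i ∈ s, f i + 1 ≤ ∏ i ∈ s, f i + s.card := by
  induction s using Finset.cons_induction with
  | empty => simp
  | cons a s ha ih =>
    simp only [Finset.sum_cons, Finset.prod_cons, Finset.card_cons]
    have hfa : 1 ≤ f a := h a (Finset.mem_cons_self a s)
    have hprod : 1 ≤ ∏ i ∈ s, f i :=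
      Finset.one_le_prod' (fun i hi => h i (Finset.mem_cons_of_mem hi))
    have := ih (fun i hi => h i (Finset.mem_cons_of_mem hi))
    nlinarith

/-- For an antitone quantum distribution `P`, the quantum distribution `U` that assigns the
minimum quantum `1/M` to all cells but the last, and `(M-n+1)/M` to the last cell,
maximizes the KL divergence from `P` among all quantum distributions with quantum `1/M`. -/
theorem kl_le_kl_max (n M : ℕ) (hn : 1 ≤ n) (hM : n ≤ M)
    (p : Fin n → ℕ) (hp : ∀ i, 0 < p i) (hpsum : ∑ i, p i = M)
    (P : Fin n → ℝ) (hP : ∀ i, P i = (p i : ℝ) / (M : ℝ))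
    (hanti : Antitone P)
    (U : Fin n → ℝ)
    (hU1 : ∀ i : Fin n, (i : ℕ) < n - 1 → U i = 1 / (M : ℝ))
    (hU2 : U ⟨n - 1, by omega⟩ = ((M : ℝ) - (n : ℝ) + 1) / (M : ℝ))
    (q : Fin n → ℕ) (hq : ∀ i, 0 < q i) (hqsum : ∑ i, q i = M)
    (Q : Fin n → ℝ) (hQ : ∀ i, Q i = (q i : ℝ) / (M : ℝ)) :
    KL P Q ≤ KL P U := by
  set last : Fin n := ⟨n - 1, by omega⟩ with hlast
  have hMpos : (0:ℝ) < M := by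
    have : 0 < M := by omega
    exact_mod_cast this
  have hnR : (n:ℝ) ≤ M := by exact_mod_cast hM
  have hK : (0:ℝ) < (M:ℝ) - n + 1 := by
    have h1 : (1:ℝ) ≤ n := by exact_mod_cast hn
    linarith
  have hPpos : ∀ i, 0 < P i := fun i => by
    rw [hP]; exact div_pos (by exact_mod_cast hp i) hMpos
  have hQpos : ∀ i, 0 < Q i := fun i => by
    rw [hQ]; exact div_pos (by exact_mod_cast hq i) hMpos
  have hUpos : ∀ i, 0 < U i := by
    intro i
    rcases lt_or_ge (i : ℕ) (n - 1) with h | h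
    · rw [hU1 i h]; positivity
    · have hi : i = last := by
        apply Fin.ext
        have := i.isLt
        simp only [hlast]
        omega
      rw [hi]
      rw [show (last : Fin n) = ⟨n - 1, by omega⟩ from rfl, hU2]
      exact div_pos hK hMpos
  have hile : ∀ i : Fin n, i ≤ last := by
    intro i
    have := i.isLt
    simp only [Fin.le_def, hlast]
    omega
  -- ratios
  have hratio : ∀ i : Fin n, i ≠ last → Q i / U i = (q i : ℝ) := by
    intro i hi
    have hlt : (i : ℕ) < n - 1 := by
      have h1 := i.isLt
      by_contra hcon
      exact hi (Fin.ext (by simp only [hlast]; omega))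
    rw [hQ, hU1 i hlt]
    field_simp
  have hratlast : Q last / U last = (q last : ℝ) / ((M:ℝ) - n + 1) := by
    rw [hQ, show (last : Fin n) = ⟨n - 1, by omega⟩ from rfl, hU2]
    rw [div_div_div_comm]
    rw [div_self hMpos.ne']
    simp
  -- Step A: the difference of divergences
  have key : KL P U - KL P Q = ∑ i, P i * Real.logb 2 (Q i / U i) := by
    rw [KL, KL, ← Finset.sum_sub_distrib]
    apply Finset.sum_congr rfl
    intro i _
    rw [Real.logb_div (hPpos i).ne' (hUpos i).ne',
        Real.logb_div (hPpos i).ne' (hQpos i).ne',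
        Real.logb_div (hQpos i).ne' (hUpos i).ne']
    ring
  -- term-wise bound
  have hterm : ∀ i : Fin n, P last * Real.logb 2 (Q i / U i) ≤ P i * Real.logb 2 (Q i / U i) := by
    intro i
    by_cases h : i = last
    · rw [h]
    · apply mul_le_mul_of_nonneg_right (hanti (hile i))
      rw [hratio i h]
      exact Real.logb_nonneg (by norm_num) (by exact_mod_cast hq i)
  -- the sum of log ratios
  have hSterm : ∀ i : Fin n, Real.logb 2 (Q i / U i) =
      Real.logb 2 ((q i : ℝ)) - (if i = last then Real.logb 2 ((M:ℝ) - n + 1) else 0) := by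
    intro i
    by_cases h : i = last
    · subst h
      rw [hratlast, Real.logb_div (by exact_mod_cast (hq _).ne') hK.ne']
      simp
    · rw [hratio i h]
      simp [h]
  have hsumlog : ∑ i, Real.logb 2 ((q i : ℝ)) = Real.logb 2 (∏ i, (q i : ℝ)) := by
    simp only [Real.logb]
    rw [← Finset.sum_div, Real.log_prod]
    intro i _
    exact_mod_cast (hq i).ne'
  have hprodge : (M:ℝ) - n + 1 ≤ ∏ i, (q i : ℝ) := by
    have hnat : M + 1 ≤ ∏ i, q i + n := by
      have := aux_sum_le_prod Finset.univ q (fun i _ => hq i)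
      simpa [hqsum] using this
    have : (M:ℝ) + 1 ≤ (∏ i, (q i : ℝ)) + n := by
      have := (Nat.cast_le (α := ℝ)).mpr hnat
      push_cast at this
      linarith
    linarith
  have hlogle : Real.logb 2 ((M:ℝ) - n + 1) ≤ Real.logb 2 (∏ i, (q i : ℝ)) :=
    Real.logb_le_logb_of_le (by norm_num) hK hprodge
  have hSeq : ∑ i, Real.logb 2 (Q i / U i) =
      Real.logb 2 (∏ i, (q i : ℝ)) - Real.logb 2 ((M:ℝ) - n + 1) := by
    simp only [hSterm]
    rw [Finset.sum_sub_distrib, hsumlog, Finset.sum_ite_eq' Finset.univ last]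
    simp
  have hSsum : 0 ≤ ∑ i, Real.logb 2 (Q i / U i) := by
    rw [hSeq]; linarith
  have hfinal : 0 ≤ ∑ i, P i * Real.logb 2 (Q i / U i) := by
    calc (0:ℝ) ≤ P last * ∑ i, Real.logb 2 (Q i / U i) :=
          mul_nonneg (hPpos last).le hSsum
      _ = ∑ i, P last * Real.logb 2 (Q i / U i) := Finset.mul_sum _ _ _
      _ ≤ ∑ i, P i * Real.logb 2 (Q i / U i) := Finset.sum_le_sum (fun i _ => hterm i)
  linarith [key, hfinal]
end

section
/- Let n ≥ 2 and M ≥ n be integers. Let P : Fin n → ℝ be an antitone quantum distribution, i.e. P(i) = p(i)/M with positive integers p(i) summing to M and P(i) ≥ P(j) for i ≤ j, and assume the last value is the strict minimum: P(i) > P(n−1) for all i < n−1. Let U : Fin n → ℝ assign U(i) = 1/M for i < n−1 and U(n−1) = (M−n+1)/M. Then for every quantum distribution Q : Fin n → ℝ with the same quantum (Q(i) = q(i)/M, q(i) positive integers summing to M) such that Q ≠ U, the strict inequality KL(P‖Q) < KL(P‖U) holds. -/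
/-!
Since `Q i / U i` is `q i` off the last cell `ℓ` and `q ℓ / (M - n + 1)` on it,
`(KL P U - KL P Q) log 2 = ∑ P i log q i - P ℓ log (M - n + 1)`. As all `q i ≥ 1`, the Weierstrass
product inequality gives `M - n + 1 = 1 + ∑ (q i - 1) ≤ ∏ q i`, hence
`P ℓ log (M - n + 1) ≤ P ℓ ∑ log q i ≤ ∑ P i log q i` because `P ℓ` is the least weight.
The last step is strict: `Q ≠ U` forces `q j ≥ 2` at some `j ≠ ℓ`, where `P j > P ℓ`.
-/

open Finset Real

theorem Finset.one_add_sum_le_prod_one_add {ι R : Type*} [CommSemiring R] [PartialOrder R]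
    [IsOrderedRing R] (s : Finset ι) {f : ι → R} (hf : ∀ i ∈ s, 0 ≤ f i) :
    1 + ∑ i ∈ s, f i ≤ ∏ i ∈ s, (1 + f i) := by
  induction s using Finset.cons_induction with
  | empty => simp
  | cons a s ha ih =>
    rw [sum_cons, prod_cons]
    have hfa : 0 ≤ f a := hf a (mem_cons_self a s)
    have hfs : ∀ i ∈ s, 0 ≤ f i := fun i hi => hf i (mem_cons_of_mem hi)
    calc 1 + (f a + ∑ i ∈ s, f i)
        ≤ 1 + (f a + ∑ i ∈ s, f i) + f a * ∑ i ∈ s, f i :=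
          le_add_of_nonneg_right (mul_nonneg hfa (sum_nonneg hfs))
      _ = (1 + f a) * (1 + ∑ i ∈ s, f i) := by ring
      _ ≤ (1 + f a) * ∏ i ∈ s, (1 + f i) :=
          mul_le_mul_of_nonneg_left (ih hfs) (add_nonneg zero_le_one hfa)

theorem Finset.mul_sum_lt_sum_mul {ι R : Type*} [CommRing R] [PartialOrder R]
    [IsStrictOrderedRing R] {s : Finset ι} {c : R} {w y : ι → R} {j : ι}
    (hw : ∀ i ∈ s, c ≤ w i) (hy : ∀ i ∈ s, 0 ≤ y i) (hj : j ∈ s) (hwj : c < w j)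
    (hyj : 0 < y j) :
    c * ∑ i ∈ s, y i < ∑ i ∈ s, w i * y i := by
  rw [← sub_pos, mul_sum, ← sum_sub_distrib]
  refine sum_pos' (fun i hi => ?_) ⟨j, hj, ?_⟩
  · rw [← sub_mul]
    exact mul_nonneg (sub_nonneg.2 (hw i hi)) (hy i hi)
  · rw [← sub_mul]
    exact mul_pos (sub_pos.2 hwj) hyj

theorem mul_log_one_add_sum_sub_one_lt_sum_mul_log {ι : Type*} {s : Finset ι} {c : ℝ}
    {w x : ι → ℝ} {j : ι} (hc : 0 ≤ c) (hw : ∀ i ∈ s, c ≤ w i) (hx : ∀ i ∈ s, 1 ≤ x i)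
    (hj : j ∈ s) (hwj : c < w j) (hxj : 1 < x j) :
    c * log (1 + ∑ i ∈ s, (x i - 1)) < ∑ i ∈ s, w i * log (x i) := by
  have hsub : ∀ i ∈ s, 0 ≤ x i - 1 := fun i hi => sub_nonneg.2 (hx i hi)
  calc c * log (1 + ∑ i ∈ s, (x i - 1))
      ≤ c * log (∏ i ∈ s, x i) := by
        refine mul_le_mul_of_nonneg_left (log_le_log ?_ ?_) hc
        · linarith [sum_nonneg hsub]
        · simpa using s.one_add_sum_le_prod_one_add hsub
    _ = c * ∑ i ∈ s, log (x i) := by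
        rw [log_prod fun i hi => (zero_lt_one.trans_le (hx i hi)).ne']
    _ < ∑ i ∈ s, w i * log (x i) :=
        mul_sum_lt_sum_mul hw (fun i hi => log_nonneg (hx i hi)) hj hwj (log_pos hxj)

theorem one_add_sum_sub_one_eq_of_forall_ne {ι : Type*} [Fintype ι] {x : ι → ℝ} {ℓ : ι}
    (h : ∀ i ≠ ℓ, x i = 1) :
    1 + ∑ i, (x i - 1) = x ℓ := by
  rw [sum_eq_single ℓ (fun i _ hi => by rw [h i hi, sub_self]) (by simp)]
  ring

theorem kl_sub_kl {n : ℕ} (P Q R : Fin n → ℝ) (hQ : ∀ i, Q i ≠ 0) (hR : ∀ i, R i ≠ 0) :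
    KL P R - KL P Q = ∑ i, P i * logb 2 (Q i / R i) := by
  rw [KL, KL, ← sum_sub_distrib]
  refine sum_congr rfl fun i _ => ?_
  rcases eq_or_ne (P i) 0 with hP | hP
  · simp [hP]
  · rw [logb_div hP (hR i), logb_div hP (hQ i), logb_div (hQ i) (hR i)]
    ring

theorem kl_sub_kl_of_quanta {n : ℕ} {P Q U q : Fin n → ℝ} {M K : ℝ} (ℓ : Fin n)
    (hM : M ≠ 0) (hK : K ≠ 0) (hq : ∀ i, q i ≠ 0) (hQ : ∀ i, Q i = q i / M)
    (hU : ∀ i ≠ ℓ, U i = 1 / M) (hUℓ : U ℓ = K / M) :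
    KL P U - KL P Q = (∑ i, P i * log (q i) - P ℓ * log K) / log 2 := by
  have hU0 : ∀ i, U i ≠ 0 := fun i => by
    by_cases hi : i = ℓ
    · rw [hi, hUℓ]; exact div_ne_zero hK hM
    · rw [hU i hi]; exact div_ne_zero one_ne_zero hM
  have hlog : ∀ i, logb 2 (Q i / U i) = (log (q i) - if i = ℓ then log K else 0) / log 2 := by
    intro i
    rw [logb]
    congr 1
    by_cases hi : i = ℓ
    · rw [hi, hQ, hUℓ, if_pos rfl, div_div_div_cancel_right₀ hM, log_div (hq ℓ) hK]
    · rw [hQ, hU i hi, if_neg hi, div_div_div_cancel_right₀ hM, div_one, sub_zero]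
  rw [kl_sub_kl P Q U (fun i => by simp [hQ, hq, hM]) hU0]
  simp only [hlog, mul_div_assoc', ← sum_div, mul_sub, mul_ite, mul_zero, sum_sub_distrib,
    sum_ite_eq', mem_univ, if_true]

/-- Uniqueness of the maximizer: if the last value of the antitone quantum distribution `P`
is its strict minimum, then `U` is the unique maximizer of the KL divergence from `P`:
every other quantum distribution `Q ≠ U` with the same quantum has strictly smaller
divergence. -/
theorem kl_lt_kl_max_of_ne (n M : ℕ) (hn : 2 ≤ n)
    (p : Fin n → ℕ)
    (P : Fin n → ℝ) (hP : ∀ i, P i = (p i : ℝ) / (M : ℝ))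
    (hmin : ∀ i : Fin n, (i : ℕ) < n - 1 → P ⟨n - 1, by omega⟩ < P i)
    (U : Fin n → ℝ)
    (hU1 : ∀ i : Fin n, (i : ℕ) < n - 1 → U i = 1 / (M : ℝ))
    (hU2 : U ⟨n - 1, by omega⟩ = ((M : ℝ) - (n : ℝ) + 1) / (M : ℝ))
    (q : Fin n → ℕ) (hq : ∀ i, 0 < q i) (hqsum : ∑ i, q i = M)
    (Q : Fin n → ℝ) (hQ : ∀ i, Q i = (q i : ℝ) / (M : ℝ))
    (hQU : Q ≠ U) :
    KL P Q < KL P U := by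
  set ℓ : Fin n := ⟨n - 1, by omega⟩
  have hne : ∀ i, i ≠ ℓ → (i : ℕ) < n - 1 := fun i hi => by
    have := i.isLt
    have : (i : ℕ) ≠ n - 1 := fun h => hi (Fin.ext h)
    omega
  have hq1 : ∀ i, (1 : ℝ) ≤ q i := fun i => by exact_mod_cast hq i
  have hK : 1 + ∑ i, ((q i : ℝ) - 1) = M - n + 1 := by
    rw [sum_sub_distrib, ← Nat.cast_sum, hqsum]
    simp only [sum_const, card_univ, Fintype.card_fin, nsmul_eq_mul, mul_one]
    ring
  have hKpos : 0 < (M : ℝ) - n + 1 := by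
    linarith [hK, sum_nonneg fun i (_ : i ∈ univ) => sub_nonneg.2 (hq1 i)]
  have hMpos : (0 : ℝ) < M := by
    have : (2 : ℝ) ≤ n := by exact_mod_cast hn
    linarith
  obtain ⟨j, hjℓ, hqj⟩ : ∃ j ≠ ℓ, 1 < (q j : ℝ) := by
    by_contra! h
    have hq_eq : ∀ i ≠ ℓ, (q i : ℝ) = 1 := fun i hi => le_antisymm (h i hi) (hq1 i)
    refine hQU (funext fun i => ?_)
    by_cases hi : i = ℓ
    · rw [hi, hQ, hU2, ← hK, one_add_sum_sub_one_eq_of_forall_ne hq_eq]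
    · rw [hQ, hU1 i (hne i hi), hq_eq i hi]
  have hPℓ : ∀ i ∈ univ, P ℓ ≤ P i := fun i _ =>
    (eq_or_ne i ℓ).elim (fun hi => hi ▸ le_rfl) fun hi => (hmin i (hne i hi)).le
  rw [← sub_pos, kl_sub_kl_of_quanta ℓ hMpos.ne' hKpos.ne' (fun i => by exact_mod_cast (hq i).ne')
    hQ (fun i hi => hU1 i (hne i hi)) hU2, ← hK]
  refine div_pos (sub_pos.2 ?_) (log_pos one_lt_two)
  exact mul_log_one_add_sum_sub_one_lt_sum_mul_log (by rw [hP]; positivity) hPℓ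
    (fun i _ => hq1 i) (mem_univ j) (hmin j (hne j hjℓ)) hqj
end

section
/- Let n ≥ 2 and M be integers with M − n ≥ 2. Let P : Fin n → ℝ be an antitone quantum distribution, i.e. P(i) = p(i)/M with positive integers p(i) summing to M and P(i) ≥ P(j) for i ≤ j. Let U : Fin n → ℝ assign U(i) = 1/M for i < n−1 and U(n−1) = (M−n+1)/M, and let Q : Fin n → ℝ assign Q(i) = 1/M for i < n−2, Q(n−2) = 2/M, and Q(n−1) = (M−n)/M. Then KL(P‖U) > KL(P‖Q). -/
/-- Special case: `U` (all free quantity on the last cell) has strictly larger divergence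
from an antitone quantum distribution `P` than the competitor `Q` that moves one quantum
from the last cell to the second-to-last cell. -/
theorem kl_special_case (n M : ℕ) (hn : 2 ≤ n) (hM : n + 2 ≤ M)
    (p : Fin n → ℕ) (hp : ∀ i, 0 < p i) (hpsum : ∑ i, p i = M)
    (P : Fin n → ℝ) (hP : ∀ i, P i = (p i : ℝ) / (M : ℝ))
    (hanti : Antitone P)
    (U : Fin n → ℝ)
    (hU1 : ∀ i : Fin n, (i : ℕ) < n - 1 → U i = 1 / (M : ℝ))
    (hU2 : U ⟨n - 1, by omega⟩ = ((M : ℝ) - (n : ℝ) + 1) / (M : ℝ))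
    (Q : Fin n → ℝ)
    (hQ1 : ∀ i : Fin n, (i : ℕ) < n - 2 → Q i = 1 / (M : ℝ))
    (hQ2 : Q ⟨n - 2, by omega⟩ = 2 / (M : ℝ))
    (hQ3 : Q ⟨n - 1, by omega⟩ = ((M : ℝ) - (n : ℝ)) / (M : ℝ)) :
    KL P Q < KL P U := by
  have hMn : (n : ℝ) + 2 ≤ (M : ℝ) := by exact_mod_cast hM
  have hn2 : (2 : ℝ) ≤ (n : ℝ) := by exact_mod_cast hn
  have hM0 : (0 : ℝ) < (M : ℝ) := by linarith
  set a : Fin n := ⟨n - 2, by omega⟩ with ha_def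
  set b : Fin n := ⟨n - 1, by omega⟩ with hb_def
  have hPpos : ∀ i, 0 < P i := by
    intro i
    rw [hP]
    have : (0 : ℝ) < (p i : ℝ) := by exact_mod_cast hp i
    positivity
  have hUpos : ∀ i, 0 < U i := by
    intro i
    rcases lt_or_ge (i : ℕ) (n - 1) with h | h
    · rw [hU1 i h]; positivity
    · have hib : i = b := Fin.ext (show i.val = n - 1 by omega)
      rw [hib, hU2]
      apply div_pos _ hM0
      linarith
  have hQpos : ∀ i, 0 < Q i := by
    intro i
    rcases lt_trichotomy (i : ℕ) (n - 2) with h | h | h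
    · rw [hQ1 i h]; positivity
    · have hia : i = a := Fin.ext (show i.val = n - 2 from h)
      rw [hia, hQ2]; positivity
    · have hib : i = b := Fin.ext (show i.val = n - 1 by omega)
      rw [hib, hQ3]
      apply div_pos _ hM0
      linarith
  have key : KL P U - KL P Q = ∑ i, P i * Real.logb 2 (Q i / U i) := by
    unfold KL
    rw [← Finset.sum_sub_distrib]
    apply Finset.sum_congr rfl
    intro i _
    rw [← mul_sub]
    congr 1
    rw [Real.logb_div (ne_of_gt (hPpos i)) (ne_of_gt (hUpos i)),
        Real.logb_div (ne_of_gt (hPpos i)) (ne_of_gt (hQpos i)),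
        Real.logb_div (ne_of_gt (hQpos i)) (ne_of_gt (hUpos i))]
    ring
  have hab : a ≠ b := by
    simp only [ha_def, hb_def, Fin.ne_iff_vne]
    omega
  have hsum : ∑ i, P i * Real.logb 2 (Q i / U i)
      = P a * Real.logb 2 (Q a / U a) + P b * Real.logb 2 (Q b / U b) := by
    have h1 : ∑ i, P i * Real.logb 2 (Q i / U i)
        = ∑ i ∈ ({a, b} : Finset (Fin n)), P i * Real.logb 2 (Q i / U i) := by
      symm
      apply Finset.sum_subset (Finset.subset_univ _)
      intro i _ hi
      simp only [Finset.mem_insert, Finset.mem_singleton] at hi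
      push_neg at hi
      have hi2 : (i : ℕ) < n - 2 := by
        have h1 : (i : ℕ) ≠ n - 2 := fun h => hi.1 (Fin.ext h)
        have h2 : (i : ℕ) ≠ n - 1 := fun h => hi.2 (Fin.ext h)
        have := i.isLt
        omega
      rw [hQ1 i hi2, hU1 i (by omega)]
      rw [div_self (by positivity : (1 / (M : ℝ)) ≠ 0)]
      simp
    rw [h1, Finset.sum_pair hab]
  -- evaluate the two remaining terms
  have hUa : U a = 1 / (M : ℝ) := hU1 a (by simp [ha_def]; omega)
  have hQaUa : Q a / U a = 2 := by
    rw [hQ2, hUa]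
    field_simp
  have hQbUb : Q b / U b = ((M : ℝ) - (n : ℝ)) / ((M : ℝ) - (n : ℝ) + 1) := by
    rw [hQ3, hU2]
    have h2 : (M : ℝ) - (n : ℝ) + 1 ≠ 0 := by linarith
    field_simp
  set x : ℝ := (M : ℝ) - (n : ℝ) with hx_def
  have hx2 : (2 : ℝ) ≤ x := by simp [hx_def]; linarith
  have hL : (-1 : ℝ) < Real.logb 2 (x / (x + 1)) := by
    have h1 : Real.logb 2 (1 / 2) = -1 := by
      rw [one_div, Real.logb_inv, Real.logb_self_eq_one one_lt_two]
    rw [← h1]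
    apply Real.logb_lt_logb one_lt_two (by norm_num)
    rw [div_lt_div_iff₀ (by norm_num) (by linarith)]
    linarith
  have hL1 : Real.logb 2 (x / (x + 1)) < 0 := by
    apply Real.logb_neg one_lt_two
    · apply div_pos <;> linarith
    · rw [div_lt_one (by linarith)]; linarith
  have hPab : P b ≤ P a := hanti (by simp [ha_def, hb_def, Fin.le_def]; omega)
  have hpos : 0 < KL P U - KL P Q := by
    rw [key, hsum, hQaUa, hQbUb, Real.logb_self_eq_one one_lt_two]
    have hb0 := hPpos b
    nlinarith [hL, hL1, hPab, hb0]
  linarith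
end

section
/- Let n ≥ 1 and M ≥ n be integers, and let P : Fin n → ℝ be any quantum distribution, i.e. P(i) = p(i)/M with positive integers p(i) summing to M (not necessarily ordered). Let j be an index at which P attains its minimum value, and let U_P : Fin n → ℝ assign U_P(i) = 1/M for i ≠ j and U_P(j) = (M−n+1)/M. Then for every quantum distribution Q : Fin n → ℝ with the same quantum (Q(i) = q(i)/M, q(i) positive integers summing to M), it holds that KL(P‖Q) ≤ KL(P‖U_P). -/
lemma sum_add_one_le_prod_add_card {ι : Type*} (s : Finset ι) (f : ι → ℕ)
    (hf : ∀ i ∈ s, 1 ≤ f i) : ∑ i ∈ s, f i + 1 ≤ ∏ i ∈ s, f i + s.card := by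
  classical
  induction s using Finset.induction_on with
  | empty => simp
  | @insert a s ha ih =>
    rw [Finset.sum_insert ha, Finset.prod_insert ha, Finset.card_insert_of_notMem ha]
    have h1 : 1 ≤ f a := hf a (Finset.mem_insert_self a s)
    have h2 : ∀ i ∈ s, 1 ≤ f i := fun i hi => hf i (Finset.mem_insert_of_mem hi)
    have h3 := ih h2
    have hprod : 1 ≤ ∏ i ∈ s, f i := Finset.one_le_prod' h2
    nlinarith

/-- Unordered version: for any quantum distribution `P` (not necessarily ordered), the
distribution `U_P` assigning the minimum quantum `1/M` to every cell except a cell `j`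
where `P` is minimal (which receives `(M-n+1)/M`) maximizes the KL divergence from `P`. -/
theorem kl_le_kl_max_unordered (n M : ℕ) (hn : 1 ≤ n) (hM : n ≤ M)
    (p : Fin n → ℕ) (hp : ∀ i, 0 < p i) (hpsum : ∑ i, p i = M)
    (P : Fin n → ℝ) (hP : ∀ i, P i = (p i : ℝ) / (M : ℝ))
    (j : Fin n) (hj : ∀ i, P j ≤ P i)
    (U : Fin n → ℝ)
    (hU1 : ∀ i : Fin n, i ≠ j → U i = 1 / (M : ℝ))
    (hU2 : U j = ((M : ℝ) - (n : ℝ) + 1) / (M : ℝ))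
    (q : Fin n → ℕ) (hq : ∀ i, 0 < q i) (hqsum : ∑ i, q i = M)
    (Q : Fin n → ℝ) (hQ : ∀ i, Q i = (q i : ℝ) / (M : ℝ)) :
    KL P Q ≤ KL P U := by
  have hM0 : 0 < M := lt_of_lt_of_le hn hM
  have hMR : (0:ℝ) < M := by exact_mod_cast hM0
  have hMn : (1:ℝ) ≤ (M:ℝ) - n + 1 := by
    have : (n:ℝ) ≤ (M:ℝ) := by exact_mod_cast hM
    linarith
  have hPpos : ∀ i, 0 < P i := fun i => by
    rw [hP]; exact div_pos (by exact_mod_cast hp i) hMR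
  have hQpos : ∀ i, 0 < Q i := fun i => by
    rw [hQ]; exact div_pos (by exact_mod_cast hq i) hMR
  have hUpos : ∀ i, 0 < U i := by
    intro i
    by_cases h : i = j
    · rw [h, hU2]; exact div_pos (by linarith) hMR
    · rw [hU1 i h]; positivity
  set L : Fin n → ℝ := fun i => Real.logb 2 (U i / Q i) with hL
  have key : KL P Q - KL P U = ∑ i, P i * L i := by
    unfold KL
    rw [← Finset.sum_sub_distrib]
    refine Finset.sum_congr rfl fun i _ => ?_
    rw [← mul_sub]
    congr 1
    rw [Real.logb_div (ne_of_gt (hPpos i)) (ne_of_gt (hQpos i)),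
        Real.logb_div (ne_of_gt (hPpos i)) (ne_of_gt (hUpos i)),
        hL]
    simp only
    rw [Real.logb_div (ne_of_gt (hUpos i)) (ne_of_gt (hQpos i))]
    ring
  have hLnonpos : ∀ i, i ≠ j → L i ≤ 0 := by
    intro i hij
    apply Real.logb_nonpos one_lt_two (le_of_lt (div_pos (hUpos i) (hQpos i)))
    rw [div_le_one (hQpos i), hU1 i hij, hQ]
    apply div_le_div_of_nonneg_right ?_ hMR.le
    exact_mod_cast hq i
  have step1 : ∑ i, P i * L i ≤ P j * ∑ i, L i := by
    rw [Finset.mul_sum]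
    refine Finset.sum_le_sum fun i _ => ?_
    by_cases h : i = j
    · rw [h]
    · exact mul_le_mul_of_nonpos_right (hj i) (hLnonpos i h)
  have hprodq : (M:ℝ) - n + 1 ≤ ∏ i, (q i : ℝ) := by
    have h := sum_add_one_le_prod_add_card Finset.univ q (fun i _ => hq i)
    rw [hqsum, Finset.card_univ, Fintype.card_fin] at h
    have h' : (M:ℝ) + 1 ≤ (∏ i, (q i : ℝ)) + n := by
      rw [← Nat.cast_prod]
      exact_mod_cast h
    linarith
  have hprodU : ∏ i, U i = ((M:ℝ) - n + 1) / (M:ℝ) ^ n := by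
    rw [← Finset.mul_prod_erase Finset.univ U (Finset.mem_univ j), hU2]
    have hc : (Finset.univ.erase j).card = n - 1 := by
      rw [Finset.card_erase_of_mem (Finset.mem_univ j), Finset.card_univ, Fintype.card_fin]
    rw [Finset.prod_congr rfl (fun i hi => hU1 i (Finset.ne_of_mem_erase hi)),
        Finset.prod_const, hc]
    obtain ⟨m, rfl⟩ : ∃ m, n = m + 1 := ⟨n - 1, (Nat.succ_pred_eq_of_pos hn).symm⟩
    rw [Nat.add_sub_cancel, pow_succ, div_pow, one_pow, div_mul_div_comm, mul_one,
      mul_comm ((M:ℝ)^m) (M:ℝ)]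
  have hprodQ : ∏ i, Q i = (∏ i, (q i : ℝ)) / (M:ℝ) ^ n := by
    rw [Finset.prod_congr rfl (fun i _ => hQ i), Finset.prod_div_distrib,
        Finset.prod_const, Finset.card_univ, Fintype.card_fin]
  have hprodle : ∏ i, (U i / Q i) ≤ 1 := by
    rw [Finset.prod_div_distrib]
    rw [div_le_one (Finset.prod_pos fun i _ => hQpos i)]
    rw [hprodU, hprodQ]
    exact div_le_div_of_nonneg_right hprodq (by positivity : (0:ℝ) ≤ (M:ℝ)^n)
  have hsumL : ∑ i, L i ≤ 0 := by
    have := Real.logb_prod (b := 2) Finset.univ (fun i => U i / Q i)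
      (fun i _ => ne_of_gt (div_pos (hUpos i) (hQpos i)))
    rw [hL]
    rw [← this]
    exact Real.logb_nonpos one_lt_two
      (le_of_lt (Finset.prod_pos fun i _ => div_pos (hUpos i) (hQpos i))) hprodle
  have : P j * ∑ i, L i ≤ 0 := mul_nonpos_of_nonneg_of_nonpos (le_of_lt (hPpos j)) hsumL
  linarith
end
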